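/- Orthogonality of phase-twisted invariant vectors for different speeds (Lemma 7.2). Assume Hypotheses (SL) and (SLO). Fix n ∈ ℤ^D with n ≠ 0 and (k, f) ∈ ℝ^D × ℝ, and for u ∈ ℝ \ {0} set θ(u) := k·n − f‖n‖₁/u (k·n = Σᵢ kᵢnᵢ). Let v, w ∈ ℝ \ {0} with v ≠ w. If Ψ ∈ H satisfies U(n, ‖n‖₁/v)Ψ = e^{iθ(v)}Ψ and ⟨Ω, Ψ⟩ = 0, and Ψ' ∈ H satisfies U(n, ‖n‖₁/w)Ψ' = e^{iθ(w)}Ψ' and ⟨Ω, Ψ'⟩ = 0, then ⟨Ψ, Ψ'⟩ = 0. -/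

import Mathlib

/-!
Write `p = (n, ‖n‖₁/v)`, `q = (n, ‖n‖₁/w)` and `χ, χ'` for the two phases. Since `U` is unitary
and `Ψ, Ψ'` are eigenvectors of `U p, U q`, we get `⟪Ψ, U (a p - b q) Ψ'⟫ = χ^a χ'^(-b) ⟪Ψ, Ψ'⟫`
for all integers `a, b`. As `v ≠ w`, some `r = a p - b q` is space-like. Then
`⟪Ψ, Bᵐ Ψ'⟫ = ⟪Ψ, Ψ'⟫` for the contraction `B = (χ^a χ'^(-b))⁻¹ U r`, so by the mean ergodic
theorem `⟪Ψ, Ψ'⟫ = ⟪Ψ, P Ψ'⟫`, where `P` projects onto the fixed points of `B`. By (SL) and (SLO)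
these fixed points are multiples of `Ω`, which is orthogonal to `Ψ`.
-/

open Filter MeasureTheory Topology

noncomputable def l1 {D : ℕ} (n : Fin D → ℤ) : ℝ := ∑ i, |(n i : ℝ)|

variable {D : ℕ} {H : Type*} [NormedAddCommGroup H] [InnerProductSpace ℂ H]
  [CompleteSpace H] [TopologicalSpace.SeparableSpace H]

open Complex

def IsSpacelike (vc : ℝ) (p : (Fin D → ℤ) × ℝ) : Prop :=
  p.1 ≠ 0 ∧ vc * |p.2| < l1 p.1

lemma l1_pos {n : Fin D → ℤ} (hn : n ≠ 0) : 0 < l1 n := by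
  obtain ⟨i, hi⟩ := Function.ne_iff.mp hn
  exact Finset.sum_pos' (fun j _ => abs_nonneg _)
    ⟨i, Finset.mem_univ i, abs_pos.mpr (Int.cast_ne_zero.mpr hi)⟩

lemma l1_zsmul (c : ℤ) (n : Fin D → ℤ) : l1 (c • n) = |(c : ℝ)| * l1 n := by
  simp only [l1, Pi.smul_apply, smul_eq_mul, Int.cast_mul, abs_mul, Finset.mul_sum]

lemma exists_int_abs_add_mul_le (t : ℝ) {s : ℝ} (hs : s ≠ 0) : ∃ b : ℤ, |t + b * s| ≤ |s| := by
  refine ⟨round (-t / s), ?_⟩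
  have h : t + round (-t / s) * s = -(s * (-t / s - round (-t / s))) := by
    field_simp
    ring
  calc |t + round (-t / s) * s| = |s| * |-t / s - round (-t / s)| := by rw [h, abs_neg, abs_mul]
    _ ≤ |s| * 1 := by gcongr; exact (abs_sub_round _).trans (by norm_num)
    _ = |s| := mul_one _

lemma exists_isSpacelike_zsmul_sub_zsmul {vc : ℝ} (hvc : 0 < vc) {n : Fin D → ℤ} (hn : n ≠ 0)
    {t t' : ℝ} (htt' : t ≠ t') : ∃ a b : ℤ, IsSpacelike vc (a • (n, t) - b • (n, t')) := by
  have hL := l1_pos hn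
  have hs : t - t' ≠ 0 := sub_ne_zero.mpr htt'
  obtain ⟨c, hc⟩ := exists_nat_gt (vc * |t - t'| / l1 n)
  have hc_pos : 0 < c := by
    have : (0 : ℝ) ≤ vc * |t - t'| / l1 n := by positivity
    exact_mod_cast this.trans_lt hc
  rw [div_lt_iff₀ hL] at hc
  obtain ⟨b, hb⟩ := exists_int_abs_add_mul_le (c * t) hs
  have hq : (b + c : ℤ) • (n, t) - b • (n, t') = ((c : ℤ) • n, c * t + b * (t - t')) := by
    refine Prod.ext (by simp [add_smul]) ?_
    simp
    ring
  refine ⟨b + c, b, ?_⟩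
  rw [hq, IsSpacelike, l1_zsmul, Int.cast_natCast, Nat.abs_cast]
  refine ⟨smul_ne_zero (by exact_mod_cast hc_pos.ne') hn, ?_⟩
  calc vc * |c * t + b * (t - t')| ≤ vc * |t - t'| := by gcongr
    _ < c * l1 n := hc

section Unitary

variable {G E : Type*} [AddCommGroup G] [NormedAddCommGroup E] [InnerProductSpace ℂ E]
  {U : G → E ≃ₗᵢ[ℂ] E}

lemma apply_add_of_trans (hUadd : ∀ p q, U (p + q) = (U q).trans (U p)) (p q : G) (x : E) :
    U (p + q) x = U p (U q x) := by
  rw [hUadd]; rfl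

lemma apply_zsmul_of_apply_eq_smul (hU0 : U 0 = LinearIsometryEquiv.refl ℂ E)
    (hUadd : ∀ p q, U (p + q) = (U q).trans (U p)) {p : G} {c : ℂ} (hc : c ≠ 0) {x : E}
    (hx : U p x = c • x) (m : ℤ) : U (m • p) x = c ^ m • x := by
  induction m using Int.induction_on with
  | zero => simp [hU0]
  | succ m ih =>
    rw [add_smul, one_smul, add_comm, apply_add_of_trans hUadd, ih, map_smul, hx, smul_smul,
      zpow_add_one₀ hc, mul_comm]
  | pred m ih =>
    apply (U p).injective
    rw [← apply_add_of_trans hUadd, map_smul, hx, smul_smul, ← zpow_add_one₀ hc,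
      sub_add_cancel, ← ih]
    congr 2
    module

lemma iterate_smul_apply (hU0 : U 0 = LinearIsometryEquiv.refl ℂ E)
    (hUadd : ∀ p q, U (p + q) = (U q).trans (U p)) (r : G) (e : ℂ) (m : ℕ) (x : E) :
    (fun z => e • U r z)^[m] x = e ^ m • U (m • r) x := by
  induction m with
  | zero => simp [hU0]
  | succ m ih =>
    rw [Function.iterate_succ_apply', ih, map_smul, smul_smul, ← apply_add_of_trans hUadd,
      succ_nsmul', pow_succ']

lemma inner_apply_zsmul_sub_zsmul (hU0 : U 0 = LinearIsometryEquiv.refl ℂ E)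
    (hUadd : ∀ p q, U (p + q) = (U q).trans (U p)) {p q : G} {c d : ℂ} (hc : ‖c‖ = 1)
    (hd : ‖d‖ = 1) {x y : E} (hx : U p x = c • x) (hy : U q y = d • y) (a b : ℤ) :
    inner ℂ x (U (a • p - b • q) y) = c ^ a * d ^ (-b) * inner ℂ x y := by
  have hc0 : c ≠ 0 := norm_ne_zero_iff.mp (by rw [hc]; exact one_ne_zero)
  have hd0 : d ≠ 0 := norm_ne_zero_iff.mp (by rw [hd]; exact one_ne_zero)
  calc inner ℂ x (U (a • p - b • q) y)
      = inner ℂ (U ((-a) • p) x) (U ((-a) • p) (U (a • p - b • q) y)) :=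
        ((U _).inner_map_map _ _).symm
    _ = inner ℂ (c ^ (-a) • x) (d ^ (-b) • y) := by
        rw [← apply_add_of_trans hUadd, apply_zsmul_of_apply_eq_smul hU0 hUadd hc0 hx,
          show -a • p + (a • p - b • q) = (-b) • q by module,
          apply_zsmul_of_apply_eq_smul hU0 hUadd hd0 hy]
    _ = c ^ a * d ^ (-b) * inner ℂ x y := by
        rw [inner_smul_left, inner_smul_right, map_zpow₀, ← RCLike.inv_eq_conj hc, inv_zpow',
          neg_neg, mul_assoc]

lemma inner_iterate_smul_apply_zsmul_sub_zsmul (hU0 : U 0 = LinearIsometryEquiv.refl ℂ E)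
    (hUadd : ∀ p q, U (p + q) = (U q).trans (U p)) {p q : G} {c d : ℂ} (hc : ‖c‖ = 1)
    (hd : ‖d‖ = 1) {x y : E} (hx : U p x = c • x) (hy : U q y = d • y) (a b : ℤ) (m : ℕ) :
    inner ℂ x ((fun z => (c ^ a * d ^ (-b))⁻¹ • U (a • p - b • q) z)^[m] y) = inner ℂ x y := by
  have hcd : c ^ a * d ^ (-b) ≠ 0 := by
    apply norm_ne_zero_iff.mp
    simp [norm_zpow, hc, hd]
  rw [iterate_smul_apply hU0 hUadd, inner_smul_right, ← natCast_zsmul, smul_sub, smul_smul,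
    smul_smul, inner_apply_zsmul_sub_zsmul hU0 hUadd hc hd hx hy, ← mul_assoc, ← mul_neg,
    zpow_mul', zpow_mul', zpow_natCast, zpow_natCast, ← mul_pow, ← mul_pow, inv_mul_cancel₀ hcd,
    one_pow, one_mul]

end Unitary

lemma inner_eq_zero_of_inner_iterate_eq {E : Type*} [NormedAddCommGroup E]
    [InnerProductSpace ℂ E] [CompleteSpace E] {B : E →L[ℂ] E} (hB : ‖B‖ ≤ 1) {x y : E}
    (hfix : ∀ z, B z = z → inner ℂ x z = 0) (hconst : ∀ m, inner ℂ x (B^[m] y) = inner ℂ x y) :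
    inner ℂ x y = 0 := by
  set P := (B.eqLocus (1 : E →L[ℂ] E)).orthogonalProjectionOnto y
  have hlim := (tendsto_const_nhds (x := x)).inner (𝕜 := ℂ)
    (B.tendsto_birkhoffAverage_orthogonalProjection hB y)
  have havg : ∀ N : ℕ, N ≠ 0 →
      inner ℂ x (birkhoffAverage ℂ B _root_.id N y) = inner ℂ x y := by
    intro N hN
    simp [birkhoffAverage, birkhoffSum, hconst, hN]
  have hxP : inner ℂ x y = inner ℂ x (P : E) :=
    tendsto_nhds_unique (tendsto_const_nhds.congr' <|
      (eventually_ne_atTop 0).mono fun N hN => (havg N hN).symm) hlim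
  exact hxP.trans (hfix P P.2)

lemma exists_eq_smul_of_apply_eq_smul {E : Type*} [AddCommGroup E] [Module ℂ E] {T : E → E}
    {Ω : E} (hfix : ∀ ψ, T ψ = ψ → ∃ c : ℂ, ψ = c • Ω)
    (heig : ∀ θ : ℝ, (∀ j : ℤ, θ ≠ 2 * Real.pi * j) → ∀ ψ, T ψ = exp (I * θ) • ψ → ψ = 0)
    {ν : ℂ} (hν : ‖ν‖ = 1) {ψ : E} (hψ : T ψ = ν • ψ) : ∃ c : ℂ, ψ = c • Ω := by
  by_cases hν1 : ν = 1
  · exact hfix ψ (by rwa [hν1, one_smul] at hψ)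
  have hν_exp : ν = exp (I * ν.arg) := by
    conv_lhs => rw [← norm_mul_exp_arg_mul_I ν, hν]
    rw [ofReal_one, one_mul, mul_comm]
  have harg : ∀ j : ℤ, ν.arg ≠ 2 * Real.pi * j := by
    intro j hj
    apply hν1
    rw [hν_exp, hj, ← exp_int_mul_two_pi_mul_I j]
    push_cast
    ring_nf
  exact ⟨0, by rw [zero_smul]; exact heig ν.arg harg ψ (by rwa [← hν_exp])⟩

theorem twisted_invariant_vectors_orthogonal_general
    (U : (Fin D → ℤ) × ℝ → H ≃ₗᵢ[ℂ] H)
    (hU0 : U 0 = LinearIsometryEquiv.refl ℂ H)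
    (hUadd : ∀ p q : (Fin D → ℤ) × ℝ, U (p + q) = (U q).trans (U p))
    (Ω : H)
    (vc : ℝ) (hvc : 0 < vc)
    (hSL : ∀ (m : Fin D → ℤ) (t : ℝ), m ≠ 0 → vc * |t| < l1 m →
      ∀ ψ : H, U (m, t) ψ = ψ → ∃ c : ℂ, ψ = c • Ω)
    (hSLO : ∀ (m : Fin D → ℤ) (t : ℝ), m ≠ 0 → vc * |t| < l1 m →
      ∀ θ : ℝ, (∀ j : ℤ, θ ≠ 2 * Real.pi * j) →
      ∀ ψ : H, U (m, t) ψ = Complex.exp (Complex.I * (θ : ℂ)) • ψ → ψ = 0)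
    (n : Fin D → ℤ) (hn : n ≠ 0) (k : Fin D → ℝ) (f : ℝ)
    (v w : ℝ) (hvw : v ≠ w)
    (Ψ Ψ' : H)
    (hΨ : U (n, l1 n / v) Ψ =
      Complex.exp (Complex.I * ((((∑ i, k i * (n i : ℝ)) - f * l1 n / v) : ℝ) : ℂ)) • Ψ)
    (hΨΩ : (inner ℂ Ω Ψ : ℂ) = 0)
    (hΨ' : U (n, l1 n / w) Ψ' =
      Complex.exp (Complex.I * ((((∑ i, k i * (n i : ℝ)) - f * l1 n / w) : ℝ) : ℂ)) • Ψ') :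
    (inner ℂ Ψ Ψ' : ℂ) = 0 := by
  have htt' : l1 n / v ≠ l1 n / w := by
    rwa [Ne, div_eq_mul_inv, div_eq_mul_inv, mul_right_inj' (l1_pos hn).ne', inv_inj]
  obtain ⟨a, b, hr, hr_space⟩ := exists_isSpacelike_zsmul_sub_zsmul hvc hn htt'
  set r := a • (n, l1 n / v) - b • (n, l1 n / w)
  set χ := exp (I * ((∑ i, k i * (n i : ℝ)) - f * l1 n / v : ℝ))
  set χ' := exp (I * ((∑ i, k i * (n i : ℝ)) - f * l1 n / w : ℝ))
  have hχ : ‖χ‖ = 1 := norm_exp_I_mul_ofReal _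
  have hχ' : ‖χ'‖ = 1 := norm_exp_I_mul_ofReal _
  set ν := χ ^ a * χ' ^ (-b)
  have hν : ‖ν‖ = 1 := by rw [norm_mul, norm_zpow, norm_zpow, hχ, hχ', one_zpow, one_zpow, one_mul]
  have hν0 : ν ≠ 0 := norm_ne_zero_iff.mp (by rw [hν]; exact one_ne_zero)
  set B : H →L[ℂ] H := ν⁻¹ • (U r).toLinearIsometry.toContinuousLinearMap
  have hB : ‖B‖ ≤ 1 := by
    refine (norm_smul_le _ _).trans ?_
    rw [norm_inv, hν, inv_one, one_mul]
    exact (U r).toLinearIsometry.norm_toContinuousLinearMap_le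
  refine inner_eq_zero_of_inner_iterate_eq hB (fun z hz => ?_)
    (inner_iterate_smul_apply_zsmul_sub_zsmul hU0 hUadd hχ hχ' hΨ hΨ' a b)
  obtain ⟨c, rfl⟩ := exists_eq_smul_of_apply_eq_smul (hSL r.1 r.2 hr hr_space)
    (hSLO r.1 r.2 hr hr_space) hν ((inv_smul_eq_iff₀ hν0).mp hz)
  rw [inner_smul_right, ← inner_conj_symm, hΨΩ, map_zero, mul_zero]

/-- **Orthogonality of phase-twisted invariant vectors for different speeds** (Lemma 7.2). -/
theorem twisted_invariant_vectors_orthogonal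
    (U : (Fin D → ℤ) × ℝ → H ≃ₗᵢ[ℂ] H)
    (hU0 : U 0 = LinearIsometryEquiv.refl ℂ H)
    (hUadd : ∀ p q : (Fin D → ℤ) × ℝ, U (p + q) = (U q).trans (U p))
    (Ω : H) (hΩ : ‖Ω‖ = 1) (hΩinv : ∀ p, U p Ω = Ω)
    (vc : ℝ) (hvc : 0 < vc)
    (hSL : ∀ (m : Fin D → ℤ) (t : ℝ), m ≠ 0 → vc * |t| < l1 m →
      ∀ ψ : H, U (m, t) ψ = ψ → ∃ c : ℂ, ψ = c • Ω)
    (hSLO : ∀ (m : Fin D → ℤ) (t : ℝ), m ≠ 0 → vc * |t| < l1 m →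
      ∀ θ : ℝ, (∀ j : ℤ, θ ≠ 2 * Real.pi * j) →
      ∀ ψ : H, U (m, t) ψ = Complex.exp (Complex.I * (θ : ℂ)) • ψ → ψ = 0)
    (n : Fin D → ℤ) (hn : n ≠ 0) (k : Fin D → ℝ) (f : ℝ)
    (v w : ℝ) (hv : v ≠ 0) (hw : w ≠ 0) (hvw : v ≠ w)
    (Ψ Ψ' : H)
    (hΨ : U (n, l1 n / v) Ψ =
      Complex.exp (Complex.I * ((((∑ i, k i * (n i : ℝ)) - f * l1 n / v) : ℝ) : ℂ)) • Ψ)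
    (hΨΩ : (inner ℂ Ω Ψ : ℂ) = 0)
    (hΨ' : U (n, l1 n / w) Ψ' =
      Complex.exp (Complex.I * ((((∑ i, k i * (n i : ℝ)) - f * l1 n / w) : ℝ) : ℂ)) • Ψ')
    (hΨ'Ω : (inner ℂ Ω Ψ' : ℂ) = 0) :
    (inner ℂ Ψ Ψ' : ℂ) = 0 :=
  twisted_invariant_vectors_orthogonal_general U hU0 hUadd Ω vc hvc hSL hSLO n hn k f v w hvw Ψ Ψ'
    hΨ hΨΩ hΨ'
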